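/- The dyadic period function G satisfies the three-term functional equation −1/(1−z) − (1/(1−z)^2)·G(1/(1−z)) + 2·G(z+1) = G(z) for every z ∈ ℂ ∖ (0,∞) (for such z all three arguments z, z+1, 1/(1−z) lie in ℂ ∖ (1,∞)). -/

import Mathlib

open scoped Classical
open MeasureTheory

/-- Cumulative sums `a₀ + a₁ + ⋯ + a_k` of the regular continued fraction
expansion of `x` (`none` once the expansion has terminated). -/
noncomputable def cfSum (x : ℝ) : ℕ → Option ℝ
  | 0 => some (⌊x⌋ : ℝ)
  | (k + 1) => (cfSum x k).bind fun s =>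
      ((GenContFract.of x).partDens.get? k).map fun b => s + b

/-- The Minkowski question mark function in its version on `[0, ∞)`:
`F([a₀; a₁, a₂, …]) = 1 - 2^{-a₀} + 2^{-(a₀+a₁)} - 2^{-(a₀+a₁+a₂)} + ⋯`. -/
noncomputable def minkQ (x : ℝ) : ℝ :=
  1 + ∑' k : ℕ, (cfSum x k).elim 0 fun s => (-1 : ℝ) ^ (k + 1) * (2 : ℝ) ^ (-s)

/-- `μ` is the Lebesgue–Stieltjes measure `dF` of the Minkowski question mark
function: it is supported on `[0, ∞)` and its cumulative distribution function
is `F = minkQ` there. -/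
def IsMinkowskiMeasure (μ : Measure ℝ) : Prop :=
  μ (Set.Iio 0) = 0 ∧ ∀ x : ℝ, 0 ≤ x → μ (Set.Iic x) = ENNReal.ofReal (minkQ x)

/-- The moment `m_L = ∫₀^∞ (x/(x+1))^L dF(x)`. -/
noncomputable def mMom (μ : Measure ℝ) (L : ℕ) : ℝ :=
  ∫ x, (x / (x + 1)) ^ L ∂μ

/-- The moment `M_L = ∫₀^∞ x^L dF(x)`. -/
noncomputable def MMom (μ : Measure ℝ) (L : ℕ) : ℝ :=
  ∫ x, x ^ L ∂μ

/-- The cut plane `ℂ ∖ (0, ∞)`. -/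
def cutPlaneZero : Set ℂ := {z : ℂ | z.im ≠ 0 ∨ z.re ≤ 0}

/-- The dyadic period function
`G(z) = ∫₀^∞ (x/(x+1))/(1 − z·x/(x+1)) dF(x)`, holomorphic on `ℂ ∖ (1,∞)`,
with `G(z) = Σ_{L≥1} m_L z^{L−1}` for `|z| < 1`. -/
noncomputable def dyadicG (μ : Measure ℝ) (z : ℂ) : ℂ :=
  ∫ x, ((x : ℂ) / ((x : ℂ) + 1)) * (1 - z * ((x : ℂ) / ((x : ℂ) + 1)))⁻¹ ∂μ

/-!
Writing `x = [a₀; a₁, a₂, …]`, the question mark function obeys the one-step recursion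
`F(x) = 1 - 2^{-a₀} F(1/{x})` (with `F(1/{x})` replaced by `1` when `x` is an integer), whence
`F(x + 1) = (F(x) + 1)/2`, `F(x) + F(1/x) = 1` and `F(x/(x+1)) = F(x)/2`. In terms of `μ = dF`
this says `2μ = (x ↦ x + 1)_* μ + (x ↦ x/(x+1))_* μ`. Integrating the kernel of `G(z + 1)`
against both sides, the pushforward under `x ↦ x/(x+1)` returns `G(z)` exactly, and the one
under `x ↦ x + 1` returns `1/(1-z) + G(1/(1-z))/(1-z)²` by an identity of rational functions.
-/

open scoped ENNReal

section ContinuedFraction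

open GenContFract

variable {x : ℝ}

lemma partDens_get?_of_fract_eq_zero (h : Int.fract x = 0) (k : ℕ) :
    (GenContFract.of x).partDens.get? k = none := by
  obtain ⟨n, rfl⟩ := Int.fract_eq_zero_iff.mp h
  simp [partDens, of_s_of_int]

lemma partDens_get?_zero_of_fract_ne_zero (h : Int.fract x ≠ 0) :
    (GenContFract.of x).partDens.get? 0 = some (⌊(Int.fract x)⁻¹⌋ : ℝ) := by
  rw [partDens, Stream'.Seq.map_get?]
  change Option.map _ (GenContFract.of x).s.head = _
  rw [of_s_head h]
  rfl

lemma partDens_get?_succ (x : ℝ) (k : ℕ) :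
    (GenContFract.of x).partDens.get? (k + 1) =
      (GenContFract.of (Int.fract x)⁻¹).partDens.get? k := by
  rw [partDens, partDens, Stream'.Seq.map_get?, Stream'.Seq.map_get?, of_s_succ]

lemma cfSum_succ_of_fract_eq_zero (h : Int.fract x = 0) (k : ℕ) : cfSum x (k + 1) = none := by
  rw [cfSum, partDens_get?_of_fract_eq_zero h]
  cases cfSum x k <;> rfl

lemma cfSum_succ_of_fract_ne_zero (h : Int.fract x ≠ 0) (k : ℕ) :
    cfSum x (k + 1) = (cfSum (Int.fract x)⁻¹ k).map ((⌊x⌋ : ℝ) + ·) := by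
  induction k with
  | zero => simp [cfSum, partDens_get?_zero_of_fract_ne_zero h]
  | succ k ih =>
    rw [cfSum, ih, partDens_get?_succ, cfSum]
    cases cfSum (Int.fract x)⁻¹ k <;>
      cases (GenContFract.of (Int.fract x)⁻¹).partDens.get? k <;> simp [add_assoc]

lemma exists_cfSum_eq_some_add_one_le {k : ℕ} {s : ℝ} (h : cfSum x (k + 1) = some s) :
    ∃ s', cfSum x k = some s' ∧ s' + 1 ≤ s := by
  obtain ⟨s', hs', b, hb, rfl⟩ : ∃ s', cfSum x k = some s' ∧ ∃ b,
      (GenContFract.of x).partDens.get? k = some b ∧ s' + b = s := by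
    simpa [cfSum, Option.bind_eq_some_iff, Option.map_eq_some_iff] using h
  exact ⟨s', hs', by linarith [of_one_le_get?_partDen hb]⟩

lemma floor_add_natCast_le_of_cfSum_eq_some {k : ℕ} {s : ℝ} (h : cfSum x k = some s) :
    ⌊x⌋ + k ≤ s := by
  induction k generalizing s with
  | zero => simp_all [cfSum]
  | succ k ih =>
    obtain ⟨s', hs', hle⟩ := exists_cfSum_eq_some_add_one_le h
    push_cast
    linarith [ih hs']

end ContinuedFraction

noncomputable def cfWeight (x : ℝ) (k : ℕ) : ℝ :=
  (cfSum x k).elim 0 fun s => (2 : ℝ) ^ (-s)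

section Weight

variable {x : ℝ}

lemma cfWeight_nonneg (x : ℝ) (k : ℕ) : 0 ≤ cfWeight x k := by
  unfold cfWeight
  cases cfSum x k <;> simp [Real.rpow_nonneg]

lemma antitone_cfWeight (x : ℝ) : Antitone (cfWeight x) := by
  refine antitone_nat_of_succ_le fun k => ?_
  rcases h : cfSum x (k + 1) with _ | s
  · simpa [cfWeight, h] using cfWeight_nonneg x k
  · obtain ⟨s', hs', hle⟩ := exists_cfSum_eq_some_add_one_le h
    simp only [cfWeight, h, hs', Option.elim]
    exact Real.rpow_le_rpow_of_exponent_le one_le_two (by linarith)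

lemma cfWeight_le (x : ℝ) (k : ℕ) :
    cfWeight x k ≤ (2 : ℝ) ^ (-⌊x⌋ : ℝ) * 2⁻¹ ^ k := by
  rcases h : cfSum x k with _ | s
  · simpa [cfWeight, h] using by positivity
  · have hle := floor_add_natCast_le_of_cfSum_eq_some h
    simp only [cfWeight, h, Option.elim]
    calc (2 : ℝ) ^ (-s) ≤ 2 ^ (-(⌊x⌋ + k : ℝ)) :=
          Real.rpow_le_rpow_of_exponent_le one_le_two (by linarith)
      _ = _ := by
          rw [neg_add, Real.rpow_add two_pos, Real.rpow_neg two_pos.le (k : ℝ),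
            Real.rpow_natCast, inv_pow]

lemma summable_cfWeight (x : ℝ) : Summable fun k => (-1 : ℝ) ^ k * cfWeight x k := by
  refine Summable.of_norm_bounded ((summable_geometric_two).mul_left ((2 : ℝ) ^ (-⌊x⌋ : ℝ)))
    fun k => ?_
  simpa [abs_of_nonneg (cfWeight_nonneg x k), one_div] using cfWeight_le x k

lemma minkQ_eq_one_sub_tsum (x : ℝ) : minkQ x = 1 - ∑' k, (-1 : ℝ) ^ k * cfWeight x k := by
  rw [minkQ, sub_eq_add_neg, ← tsum_neg]
  congr 1
  refine tsum_congr fun k => ?_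
  cases h : cfSum x k <;> simp [cfWeight, h, pow_succ]

lemma cfWeight_zero (x : ℝ) : cfWeight x 0 = (2 : ℝ) ^ (-⌊x⌋ : ℝ) := rfl

lemma cfWeight_succ_of_fract_eq_zero (h : Int.fract x = 0) (k : ℕ) : cfWeight x (k + 1) = 0 := by
  simp [cfWeight, cfSum_succ_of_fract_eq_zero h]

lemma cfWeight_succ_of_fract_ne_zero (h : Int.fract x ≠ 0) (k : ℕ) :
    cfWeight x (k + 1) = (2 : ℝ) ^ (-⌊x⌋ : ℝ) * cfWeight (Int.fract x)⁻¹ k := by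
  rw [cfWeight, cfSum_succ_of_fract_ne_zero h, cfWeight]
  cases cfSum (Int.fract x)⁻¹ k <;>
    simp [Real.rpow_add two_pos, mul_comm]

lemma minkQ_of_fract_eq_zero (h : Int.fract x = 0) :
    minkQ x = 1 - (2 : ℝ) ^ (-⌊x⌋ : ℝ) := by
  rw [minkQ_eq_one_sub_tsum, tsum_eq_single 0, pow_zero, one_mul, cfWeight_zero]
  rintro (_ | k) hk
  · exact absurd rfl hk
  · rw [cfWeight_succ_of_fract_eq_zero h, mul_zero]

lemma minkQ_of_fract_ne_zero (h : Int.fract x ≠ 0) :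
    minkQ x = 1 - (2 : ℝ) ^ (-⌊x⌋ : ℝ) * minkQ (Int.fract x)⁻¹ := by
  rw [minkQ_eq_one_sub_tsum, minkQ_eq_one_sub_tsum, (summable_cfWeight x).tsum_eq_zero_add]
  have hterm (k : ℕ) : (-1 : ℝ) ^ (k + 1) * cfWeight x (k + 1) =
      -(2 : ℝ) ^ (-⌊x⌋ : ℝ) * ((-1) ^ k * cfWeight (Int.fract x)⁻¹ k) := by
    rw [cfWeight_succ_of_fract_ne_zero h, pow_succ]
    ring
  rw [tsum_congr hterm, tsum_mul_left, cfWeight_zero]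
  ring

end Weight

lemma minkQ_natCast (n : ℕ) : minkQ n = 1 - 2⁻¹ ^ n := by
  rw [minkQ_of_fract_eq_zero (Int.fract_natCast n), Int.floor_natCast, Int.cast_natCast,
    Real.rpow_neg two_pos.le, Real.rpow_natCast, inv_pow]

lemma minkQ_zero : minkQ 0 = 0 := by
  simpa using minkQ_natCast 0

lemma minkQ_add_one (x : ℝ) : minkQ (x + 1) = (minkQ x + 1) / 2 := by
  have hpow : (2 : ℝ) ^ (-⌊x + 1⌋ : ℝ) = (2 : ℝ) ^ (-⌊x⌋ : ℝ) / 2 := by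
    rw [Int.floor_add_one, Int.cast_add, Int.cast_one, neg_add, Real.rpow_add two_pos,
      Real.rpow_neg_one, div_eq_mul_inv]
  by_cases h : Int.fract x = 0
  · rw [minkQ_of_fract_eq_zero (by rwa [Int.fract_add_one]), minkQ_of_fract_eq_zero h, hpow]
    ring
  · rw [minkQ_of_fract_ne_zero (by rwa [Int.fract_add_one]), minkQ_of_fract_ne_zero h, hpow,
      Int.fract_add_one]
    ring

lemma minkQ_add_minkQ_inv_of_lt_one {t : ℝ} (ht₀ : 0 < t) (ht₁ : t < 1) :
    minkQ t + minkQ t⁻¹ = 1 := by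
  have hfract : Int.fract t = t := Int.fract_eq_self.mpr ⟨ht₀.le, ht₁⟩
  rw [minkQ_of_fract_ne_zero (hfract.symm ▸ ht₀.ne'), hfract,
    Int.floor_eq_zero_iff.mpr ⟨ht₀.le, ht₁⟩]
  simp

lemma minkQ_add_minkQ_inv {x : ℝ} (hx : 0 < x) : minkQ x + minkQ x⁻¹ = 1 := by
  rcases lt_trichotomy x 1 with h | rfl | h
  · exact minkQ_add_minkQ_inv_of_lt_one hx h
  · have := minkQ_natCast 1
    norm_num at this ⊢
    linarith
  · rw [add_comm]
    simpa using minkQ_add_minkQ_inv_of_lt_one (inv_pos.mpr hx) (inv_lt_one_of_one_lt₀ h)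

lemma minkQ_div_add_one {x : ℝ} (hx : 0 ≤ x) : minkQ (x / (x + 1)) = minkQ x / 2 := by
  rcases hx.eq_or_lt with rfl | hx
  · simp [minkQ_zero]
  have hy₀ : 0 < x / (x + 1) := by positivity
  have hy₁ : x / (x + 1) < 1 := (div_lt_one (by positivity)).mpr (lt_add_one x)
  have hinv : (x / (x + 1))⁻¹ = x⁻¹ + 1 := by field_simp; ring
  have h₁ := minkQ_add_minkQ_inv_of_lt_one hy₀ hy₁
  have h₂ := minkQ_add_minkQ_inv hx
  rw [hinv, minkQ_add_one] at h₁
  linarith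

lemma minkQ_nonneg {x : ℝ} (hx : 0 ≤ x) : 0 ≤ minkQ x := by
  have hle := (antitone_cfWeight x).tendsto_le_alternating_series
    (summable_cfWeight x).hasSum.tendsto_sum_nat 0
  have hw : cfWeight x 0 ≤ 1 :=
    Real.rpow_le_one_of_one_le_of_nonpos one_le_two (by simpa using Int.floor_nonneg.mpr hx)
  rw [minkQ_eq_one_sub_tsum]
  simp only [mul_zero, zero_add, Finset.sum_range_one, pow_zero, one_mul] at hle
  linarith

lemma ofReal_le_tsum_indicator_Ioi (x : ℝ) :
    ENNReal.ofReal x ≤ ∑' n : ℕ, (Set.Ioi (n : ℝ)).indicator 1 x := by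
  calc ENNReal.ofReal x ≤ ⌈x⌉₊ := by
        simpa using ENNReal.ofReal_le_ofReal (Nat.le_ceil x)
    _ = ∑ n ∈ Finset.range ⌈x⌉₊, (Set.Ioi (n : ℝ)).indicator 1 x := by
        have hone : ∀ n ∈ Finset.range ⌈x⌉₊,
            (Set.Ioi (n : ℝ)).indicator 1 x = (1 : ℝ≥0∞) :=
          fun n hn => Set.indicator_of_mem (Nat.lt_ceil.mp (Finset.mem_range.mp hn)) 1
        simp [Finset.sum_congr rfl hone]
    _ ≤ _ := ENNReal.sum_le_tsum _

lemma lintegral_ofReal_le_tsum_measure_Ioi (ν : Measure ℝ) :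
    ∫⁻ x, ENNReal.ofReal x ∂ν ≤ ∑' n : ℕ, ν (Set.Ioi n) :=
  calc ∫⁻ x, ENNReal.ofReal x ∂ν
        ≤ ∫⁻ x, ∑' n : ℕ, (Set.Ioi (n : ℝ)).indicator 1 x ∂ν :=
        lintegral_mono ofReal_le_tsum_indicator_Ioi
    _ = ∑' n : ℕ, ν (Set.Ioi n) := by
        rw [lintegral_tsum fun n => (measurable_one.indicator measurableSet_Ioi).aemeasurable]
        simp [lintegral_indicator measurableSet_Ioi]

namespace IsMinkowskiMeasure

variable {μ : Measure ℝ}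

lemma ae_nonneg (hμ : IsMinkowskiMeasure μ) : ∀ᵐ x ∂μ, 0 ≤ x := by
  rw [ae_iff]
  convert hμ.1
  ext
  simp

lemma measure_Iic_of_neg (hμ : IsMinkowskiMeasure μ) {a : ℝ} (ha : a < 0) :
    μ (Set.Iic a) = 0 :=
  measure_mono_null (Set.Iic_subset_Iio.mpr ha) hμ.1

lemma isProbabilityMeasure (hμ : IsMinkowskiMeasure μ) : IsProbabilityMeasure μ := by
  refine ⟨tendsto_nhds_unique
    ((tendsto_measure_Iic_atTop μ).comp tendsto_natCast_atTop_atTop) ?_⟩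
  have hF (n : ℕ) : μ (Set.Iic n) = ENNReal.ofReal (1 - 2⁻¹ ^ n) := by
    rw [hμ.2 n n.cast_nonneg, minkQ_natCast]
  simp only [Function.comp_def, hF]
  simpa using (ENNReal.tendsto_ofReal ((tendsto_pow_atTop_nhds_zero_of_lt_one (by norm_num)
    (by norm_num : (2⁻¹ : ℝ) < 1)).const_sub 1))

lemma measure_Ioi_natCast (hμ : IsMinkowskiMeasure μ) (n : ℕ) :
    μ (Set.Ioi n) = ENNReal.ofReal (2⁻¹ ^ n) := by
  have := hμ.isProbabilityMeasure
  have hq : (2⁻¹ : ℝ) ^ n ≤ 1 := pow_le_one₀ (by norm_num) (by norm_num)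
  rw [← Set.compl_Iic, prob_compl_eq_one_sub measurableSet_Iic, hμ.2 n n.cast_nonneg,
    minkQ_natCast, ← ENNReal.ofReal_one, ← ENNReal.ofReal_sub _ (by linarith), sub_sub_cancel]

lemma integrable_id (hμ : IsMinkowskiMeasure μ) : Integrable (fun x => x) μ := by
  refine ⟨measurable_id.aestronglyMeasurable,
    (hasFiniteIntegral_iff_ofReal hμ.ae_nonneg).mpr ?_⟩
  calc ∫⁻ x, ENNReal.ofReal x ∂μ ≤ ∑' n : ℕ, μ (Set.Ioi n) :=
        lintegral_ofReal_le_tsum_measure_Ioi μ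
    _ = ∑' n : ℕ, 2⁻¹ ^ n := tsum_congr fun n => by
        rw [hμ.measure_Ioi_natCast, ENNReal.ofReal_pow (by norm_num),
          ENNReal.ofReal_inv_of_pos two_pos, ENNReal.ofReal_ofNat]
    _ < ⊤ := by
        rw [ENNReal.tsum_geometric, ENNReal.one_sub_inv_two, inv_inv]
        exact ENNReal.ofNat_lt_top

lemma two_mul_measure_Iic_of_lt_one (hμ : IsMinkowskiMeasure μ) {a : ℝ} (ha₀ : 0 ≤ a)
    (ha₁ : a < 1) :
    2 * μ (Set.Iic a) = μ (Set.Iic (a - 1)) + μ ((fun x => x / (x + 1)) ⁻¹' Set.Iic a) := by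
  set c := a / (1 - a) with hc
  have hc₀ : 0 ≤ c := div_nonneg ha₀ (by linarith)
  have hT : (fun x => x / (x + 1)) ⁻¹' Set.Iic a =ᵐ[μ] Set.Iic c := by
    refine Filter.eventuallyEq_set.mpr ?_
    filter_upwards [hμ.ae_nonneg] with x hx
    simp only [Set.mem_preimage, Set.mem_Iic, hc]
    rw [div_le_iff₀ (by linarith), le_div_iff₀ (by linarith)]
    constructor <;> intro h <;> linarith
  have hca : c / (c + 1) = a := by
    rw [hc, div_add_one (by linarith), div_div_div_cancel_right₀ (by linarith)]
    simp
  rw [measure_congr hT, hμ.measure_Iic_of_neg (a := a - 1) (by linarith), hμ.2 a ha₀,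
    hμ.2 c hc₀, ← hca, minkQ_div_add_one hc₀, ← ENNReal.ofReal_ofNat 2,
    ← ENNReal.ofReal_mul zero_le_two, zero_add]
  ring_nf

lemma two_mul_measure_Iic_of_one_le (hμ : IsMinkowskiMeasure μ) {a : ℝ} (ha : 1 ≤ a) :
    2 * μ (Set.Iic a) = μ (Set.Iic (a - 1)) + μ ((fun x => x / (x + 1)) ⁻¹' Set.Iic a) := by
  have := hμ.isProbabilityMeasure
  have hT : (fun x => x / (x + 1)) ⁻¹' Set.Iic a =ᵐ[μ] Set.univ := by
    refine Filter.eventuallyEq_set.mpr ?_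
    filter_upwards [hμ.ae_nonneg] with x hx
    simp only [Set.mem_preimage, Set.mem_Iic, Set.mem_univ, iff_true]
    exact ((div_lt_one (by linarith)).mpr (lt_add_one x)).le.trans ha
  have hF := minkQ_add_one (a - 1)
  rw [sub_add_cancel] at hF
  rw [measure_congr hT, measure_univ, hμ.2 a (by linarith), hμ.2 (a - 1) (by linarith), hF,
    ← ENNReal.ofReal_ofNat 2, ← ENNReal.ofReal_mul zero_le_two, ← ENNReal.ofReal_one,
    ← ENNReal.ofReal_add (minkQ_nonneg (by linarith)) zero_le_one]
  ring_nf

lemma two_mul_measure_Iic (hμ : IsMinkowskiMeasure μ) (a : ℝ) :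
    2 * μ (Set.Iic a) = μ (Set.Iic (a - 1)) + μ ((fun x => x / (x + 1)) ⁻¹' Set.Iic a) := by
  rcases lt_or_ge a 0 with ha₀ | ha₀
  · have hT : (fun x => x / (x + 1)) ⁻¹' Set.Iic a =ᵐ[μ] (∅ : Set ℝ) := by
      refine Filter.eventuallyEq_set.mpr ?_
      filter_upwards [hμ.ae_nonneg] with x hx
      simpa using ha₀.trans_le (by positivity : 0 ≤ x / (x + 1))
    rw [measure_congr hT, hμ.measure_Iic_of_neg ha₀, hμ.measure_Iic_of_neg (by linarith)]
    simp
  rcases lt_or_ge a 1 with ha₁ | ha₁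
  · exact hμ.two_mul_measure_Iic_of_lt_one ha₀ ha₁
  · exact hμ.two_mul_measure_Iic_of_one_le ha₁

lemma two_smul_eq_map_add_map (hμ : IsMinkowskiMeasure μ) :
    (2 : ℝ≥0∞) • μ = μ.map (· + 1) + μ.map (fun x => x / (x + 1)) := by
  have := hμ.isProbabilityMeasure
  refine (Measure.ext_of_Iic _ _ fun a => ?_).symm
  have hshift : (· + 1) ⁻¹' Set.Iic a = Set.Iic (a - 1) := by ext; simp [le_sub_iff_add_le]
  rw [Measure.smul_apply, smul_eq_mul, Measure.add_apply,
    Measure.map_apply (measurable_add_const 1) measurableSet_Iic, hshift,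
    Measure.map_apply (by fun_prop) measurableSet_Iic, hμ.two_mul_measure_Iic]

lemma two_smul_integral {E : Type*} [NormedAddCommGroup E] [NormedSpace ℝ E]
    (hμ : IsMinkowskiMeasure μ) {f : ℝ → E} (hf : StronglyMeasurable f)
    (h₁ : Integrable (fun x => f (x + 1)) μ) (h₂ : Integrable (fun x => f (x / (x + 1))) μ) :
    (2 : ℝ) • ∫ x, f x ∂μ = ∫ x, f (x + 1) ∂μ + ∫ x, f (x / (x + 1)) ∂μ := by
  have hshift : AEMeasurable (· + 1) μ := (measurable_add_const 1).aemeasurable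
  have hT : AEMeasurable (fun x : ℝ => x / (x + 1)) μ := by fun_prop
  rw [← integral_map hshift hf.aestronglyMeasurable, ← integral_map hT hf.aestronglyMeasurable,
    ← integral_add_measure ((integrable_map_measure hf.aestronglyMeasurable hshift).mpr h₁)
      ((integrable_map_measure hf.aestronglyMeasurable hT).mpr h₂),
    ← hμ.two_smul_eq_map_add_map, integral_smul_measure]
  norm_num

end IsMinkowskiMeasure

lemma ne_ofReal_of_mem_cutPlaneZero {z : ℂ} (hz : z ∈ cutPlaneZero) {r : ℝ} (hr : 0 < r) :
    z ≠ r := by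
  rintro rfl
  rcases hz with h | h
  · exact h (Complex.ofReal_im r)
  · exact (Complex.ofReal_re r ▸ h).not_gt hr

lemma one_sub_mul_ofReal_ne_zero {z : ℂ} (hz : z ∈ cutPlaneZero) {r : ℝ} (hr : 0 ≤ r) :
    1 - z * r ≠ 0 := by
  intro h
  rcases hr.eq_or_lt with rfl | hr
  · simp at h
  · refine ne_ofReal_of_mem_cutPlaneZero hz (inv_pos.mpr hr) ?_
    rw [Complex.ofReal_inv]
    exact eq_inv_of_mul_eq_one_left (by linear_combination -h)

lemma one_sub_inv_one_sub_mul_ofReal_ne_zero {z : ℂ} (hz : z ∈ cutPlaneZero) (hz₀ : z ≠ 0)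
    {t : ℝ} (ht : t ≤ 1) : 1 - (1 - z)⁻¹ * t ≠ 0 := by
  have h₁ : 1 - z ≠ 0 := by simpa using one_sub_mul_ofReal_ne_zero hz zero_le_one
  intro h
  have hzt : z = ((1 - t : ℝ) : ℂ) := by
    field_simp at h
    push_cast
    linear_combination -h
  rcases ht.lt_or_eq with ht | rfl
  · exact ne_ofReal_of_mem_cutPlaneZero hz (by linarith) hzt
  · simp [hzt] at hz₀

noncomputable def dyadicIntegrand (w : ℂ) (x : ℝ) : ℂ :=
  ((x : ℂ) / ((x : ℂ) + 1)) * (1 - w * ((x : ℂ) / ((x : ℂ) + 1)))⁻¹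

lemma dyadicG_eq_integral (μ : Measure ℝ) (w : ℂ) :
    dyadicG μ w = ∫ x, dyadicIntegrand w x ∂μ := rfl

lemma measurable_dyadicIntegrand (w : ℂ) : Measurable (dyadicIntegrand w) := by
  unfold dyadicIntegrand
  fun_prop

lemma dyadicIntegrand_eq {x : ℝ} (hx : 0 ≤ x) (w : ℂ) :
    dyadicIntegrand w x = x * (x + 1 - w * x)⁻¹ := by
  have hx₁ : (x : ℂ) + 1 ≠ 0 := by exact_mod_cast (by linarith : x + 1 ≠ 0)
  rw [dyadicIntegrand,
    show 1 - w * (x / (x + 1)) = ((x : ℂ) + 1 - w * x) / (x + 1) by field_simp, inv_div,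
    div_mul_div_cancel₀ hx₁, div_eq_mul_inv]

lemma dyadicIntegrand_div_add_one {x : ℝ} (hx : 0 ≤ x) (z : ℂ) :
    dyadicIntegrand (z + 1) (x / (x + 1)) = dyadicIntegrand z x := by
  -- with `u = x/(x+1)`, both sides are `u (1 - z u)⁻¹` since `u + 1 - (z + 1) u = 1 - z u`
  rw [dyadicIntegrand_eq (by positivity), dyadicIntegrand]
  push_cast
  ring_nf

lemma dyadicIntegrand_add_one {z : ℂ} {x : ℝ} (hx : 0 ≤ x) (h₁ : 1 - z ≠ 0)
    (h₂ : 1 - z * (x + 1) ≠ 0) :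
    dyadicIntegrand (z + 1) (x + 1) =
      (1 - z)⁻¹ + (1 - z)⁻¹ ^ 2 * dyadicIntegrand (1 - z)⁻¹ x := by
  rw [dyadicIntegrand_eq (by linarith), dyadicIntegrand_eq hx, Complex.ofReal_add,
    Complex.ofReal_one, show (x : ℂ) + 1 + 1 - (z + 1) * (x + 1) = 1 - z * (x + 1) by ring,
    show (x : ℂ) + 1 - (1 - z)⁻¹ * x = (1 - z * (x + 1)) / (1 - z) by field_simp; ring,
    inv_div]
  generalize hD : 1 - z * (x + 1) = D at h₂ ⊢
  field_simp
  linear_combination hD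

lemma integrable_dyadicIntegrand {μ : Measure ℝ} [IsFiniteMeasure μ]
    (hμ : ∀ᵐ x ∂μ, 0 ≤ x) {w : ℂ} (hw : ∀ t ∈ Set.Icc (0 : ℝ) 1, 1 - w * t ≠ 0) :
    Integrable (dyadicIntegrand w) μ := by
  obtain ⟨C, hC⟩ := isCompact_Icc.exists_bound_of_continuousOn
    (f := fun t : ℝ => (1 - w * t)⁻¹)
    ((by fun_prop : Continuous fun t : ℝ => 1 - w * t).continuousOn.inv₀ hw)
  refine (integrable_const C).mono' (measurable_dyadicIntegrand w).aestronglyMeasurable ?_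
  filter_upwards [hμ] with x hx
  have ht : x / (x + 1) ∈ Set.Icc (0 : ℝ) 1 :=
    ⟨by positivity, (div_le_one (by positivity)).mpr (by linarith)⟩
  have hcast : ((x / (x + 1) : ℝ) : ℂ) = x / (x + 1) := by push_cast; rfl
  have hbound := hC _ ht
  rw [hcast] at hbound
  rw [dyadicIntegrand, norm_mul, ← hcast, Complex.norm_real, Real.norm_of_nonneg ht.1,
    hcast]
  exact (mul_le_of_le_one_left (norm_nonneg _) ht.2).trans hbound

namespace IsMinkowskiMeasure

variable {μ : Measure ℝ} {z : ℂ}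

lemma integrable_dyadicIntegrand_one (hμ : IsMinkowskiMeasure μ) :
    Integrable (dyadicIntegrand 1) μ := by
  refine hμ.integrable_id.ofReal.congr ?_
  filter_upwards [hμ.ae_nonneg] with x hx
  rw [dyadicIntegrand_eq hx]
  simp

lemma integrable_dyadicIntegrand_of_mem_cutPlaneZero (hμ : IsMinkowskiMeasure μ)
    (hz : z ∈ cutPlaneZero) : Integrable (dyadicIntegrand z) μ :=
  have := hμ.isProbabilityMeasure
  integrable_dyadicIntegrand hμ.ae_nonneg fun _ ht => one_sub_mul_ofReal_ne_zero hz ht.1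

lemma integrable_dyadicIntegrand_inv_one_sub (hμ : IsMinkowskiMeasure μ)
    (hz : z ∈ cutPlaneZero) : Integrable (dyadicIntegrand (1 - z)⁻¹) μ := by
  have := hμ.isProbabilityMeasure
  rcases eq_or_ne z 0 with rfl | hz₀
  -- at `z = 0` the integrand is `x` itself, so this is the finiteness of the first moment
  · simpa using hμ.integrable_dyadicIntegrand_one
  · exact integrable_dyadicIntegrand hμ.ae_nonneg fun _ ht =>
      one_sub_inv_one_sub_mul_ofReal_ne_zero hz hz₀ ht.2

end IsMinkowskiMeasure

/-- The three-term functional equation of the dyadic period function: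
`−1/(1−z) − (1/(1−z)²)·G(1/(1−z)) + 2·G(z+1) = G(z)` for `z ∈ ℂ ∖ (0,∞)`. -/
theorem dyadicG_three_term_equation (μ : Measure ℝ) (hμ : IsMinkowskiMeasure μ)
    (z : ℂ) (hz : z ∈ cutPlaneZero) :
    -(1 - z)⁻¹ - (1 - z)⁻¹ ^ 2 * dyadicG μ (1 - z)⁻¹ + 2 * dyadicG μ (z + 1) =
      dyadicG μ z := by
  have := hμ.isProbabilityMeasure
  have hshift : (fun x => dyadicIntegrand (z + 1) (x + 1)) =ᵐ[μ]
      fun x => (1 - z)⁻¹ + (1 - z)⁻¹ ^ 2 * dyadicIntegrand (1 - z)⁻¹ x := by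
    filter_upwards [hμ.ae_nonneg] with x hx
    refine dyadicIntegrand_add_one hx ?_ ?_
    · simpa using one_sub_mul_ofReal_ne_zero hz zero_le_one
    · simpa using one_sub_mul_ofReal_ne_zero hz (by linarith : 0 ≤ x + 1)
  have hT : (fun x => dyadicIntegrand (z + 1) (x / (x + 1))) =ᵐ[μ] dyadicIntegrand z := by
    filter_upwards [hμ.ae_nonneg] with x hx using dyadicIntegrand_div_add_one hx z
  have hc := (hμ.integrable_dyadicIntegrand_inv_one_sub hz).const_mul ((1 - z)⁻¹ ^ 2)
  have h := hμ.two_smul_integral (measurable_dyadicIntegrand (z + 1)).stronglyMeasurable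
    (((integrable_const _).add hc).congr hshift.symm)
    ((hμ.integrable_dyadicIntegrand_of_mem_cutPlaneZero hz).congr hT.symm)
  rw [integral_congr_ae hshift, integral_congr_ae hT, integral_add (integrable_const _) hc,
    integral_const, integral_const_mul, Complex.real_smul] at h
  simp only [dyadicG_eq_integral, probReal_univ, one_smul] at h ⊢
  push_cast at h
  linear_combination h
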